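/- Let n ≥ 1 and suppose p = 2n+1 is prime. Then the polynomial θ_n(z) = Σ_{k=0}^{n} c_k^{(n)} z^k with c_k^{(n)} = C(n+k,2k) + 2·C(n+k,2k+1) is irreducible over ℚ. -/

import Mathlib

/-! From `C(m, j+1)·(j+1) = C(m, j)·(m-j)` one gets `(2k+1)·c_k = p·C(n+k, 2k)`. For `k < n` the
factor `2k+1` is a unit modulo the prime `p = 2n+1`, so `p ∣ c_k`; moreover `c_n = 1` and
`c_0 = p`. Hence `θ_n` is monic and Eisenstein at `p`, so irreducible over `ℤ`, and by Gauss's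
lemma over `ℚ`. -/

open Finset Polynomial

/-- The coefficient `c_k^{(n)} = C(n+k,2k) + 2·C(n+k,2k+1)` of `θ_n`. -/
def thetaCoeff (n k : ℕ) : ℤ := ((n + k).choose (2 * k) : ℤ) + 2 * ((n + k).choose (2 * k + 1) : ℤ)

/-- The integer polynomial `θ_n(z) = Σ_{k=0}^{n} c_k^{(n)} z^k`. -/
noncomputable def thetaPoly (n : ℕ) : Polynomial ℤ :=
  ∑ k ∈ Finset.range (n + 1), Polynomial.C (thetaCoeff n k) * Polynomial.X ^ k

lemma thetaCoeff_zero (n : ℕ) : thetaCoeff n 0 = 2 * n + 1 := by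
  simp [thetaCoeff]
  ring

lemma thetaCoeff_self (n : ℕ) : thetaCoeff n n = 1 := by
  simp [thetaCoeff, ← two_mul]

lemma two_mul_add_one_mul_thetaCoeff (n k : ℕ) :
    (2 * k + 1 : ℤ) * thetaCoeff n k = (2 * n + 1) * (n + k).choose (2 * k) := by
  rcases le_or_gt k n with hkn | hnk
  · obtain ⟨d, rfl⟩ := Nat.exists_eq_add_of_le hkn
    have h := Nat.choose_succ_right_eq (k + d + k) (2 * k)
    rw [show k + d + k - 2 * k = d by omega] at h
    have h' : ((k + d + k).choose (2 * k + 1) : ℤ) * (2 * k + 1)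
        = (k + d + k).choose (2 * k) * d := by exact_mod_cast h
    unfold thetaCoeff
    push_cast
    linear_combination 2 * h'
  · simp [thetaCoeff, Nat.choose_eq_zero_of_lt (by omega : n + k < 2 * k),
      Nat.choose_eq_zero_of_lt (by omega : n + k < 2 * k + 1)]

lemma dvd_thetaCoeff {n k : ℕ} (hp : (2 * n + 1).Prime) (hk : k < n) :
    (2 * n + 1 : ℤ) ∣ thetaCoeff n k := by
  have hpz : Prime (2 * n + 1 : ℤ) := by exact_mod_cast Nat.prime_iff_prime_int.1 hp
  have hdvd : (2 * n + 1 : ℤ) ∣ (2 * k + 1) * thetaCoeff n k :=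
    two_mul_add_one_mul_thetaCoeff n k ▸ dvd_mul_right _ _
  refine (hpz.dvd_or_dvd hdvd).resolve_left fun h => ?_
  have := Int.le_of_dvd (by positivity) h
  omega

lemma thetaPoly_coeff (n k : ℕ) :
    (thetaPoly n).coeff k = if k ≤ n then thetaCoeff n k else 0 := by
  simp [thetaPoly, coeff_X_pow]

lemma thetaPoly_natDegree (n : ℕ) : (thetaPoly n).natDegree = n := by
  refine le_antisymm (natDegree_le_iff_coeff_eq_zero.2 fun m hm => ?_) (le_natDegree_of_ne_zero ?_)
  · rw [thetaPoly_coeff, if_neg (by omega)]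
  · simp [thetaPoly_coeff, thetaCoeff_self]

lemma thetaPoly_monic (n : ℕ) : (thetaPoly n).Monic := by
  simp [Monic, leadingCoeff, thetaPoly_natDegree, thetaPoly_coeff, thetaCoeff_self]

lemma thetaPoly_isEisensteinAt {n : ℕ} (hp : (2 * n + 1).Prime) :
    (thetaPoly n).IsEisensteinAt (Ideal.span {(2 * n + 1 : ℤ)}) := by
  have hpz : Prime (2 * n + 1 : ℤ) := by exact_mod_cast Nat.prime_iff_prime_int.1 hp
  refine ⟨?_, fun hk => ?_, ?_⟩
  · rw [(thetaPoly_monic n).leadingCoeff, Ideal.mem_span_singleton]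
    exact hpz.not_dvd_one
  · rw [thetaPoly_natDegree] at hk
    rw [thetaPoly_coeff, if_pos hk.le, Ideal.mem_span_singleton]
    exact dvd_thetaCoeff hp hk
  · rw [Ideal.span_singleton_pow, Ideal.mem_span_singleton, thetaPoly_coeff,
      if_pos (Nat.zero_le n), thetaCoeff_zero, sq]
    intro h
    exact hpz.not_dvd_one ((mul_dvd_mul_iff_left hpz.ne_zero).1 (by simpa using h))

theorem stmt_18_general (n : ℕ) (hp : Nat.Prime (2 * n + 1)) :
    Irreducible ((thetaPoly n).map (Int.castRingHom ℚ)) := by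
  have hpz : Prime (2 * n + 1 : ℤ) := by exact_mod_cast Nat.prime_iff_prime_int.1 hp
  have hprim := (thetaPoly_monic n).isPrimitive
  refine (IsPrimitive.Int.irreducible_iff_irreducible_map_cast hprim).1 ?_
  refine (thetaPoly_isEisensteinAt hp).irreducible ((Ideal.span_singleton_prime hpz.ne_zero).2 hpz)
    hprim ?_
  rw [thetaPoly_natDegree]
  have := hp.two_le
  omega

theorem stmt_18 (n : ℕ) (hn : 1 ≤ n) (hp : Nat.Prime (2 * n + 1)) :
    Irreducible ((thetaPoly n).map (Int.castRingHom ℚ)) :=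
  stmt_18_general n hp
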